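/- Let J be as given and suppose that every edge of the coding graph E_J is non-negative. If ω and ξ are finite paths in E_J with E(ω) = E(ξ) and r(ω) = r(ξ), then ω = ξ. -/

import Mathlib

/-!
A non-negative edge from `(μ₁, e₁ν₁)` to `(μ₂, e₂ν₂)` in `E_J` forces `ν₁ ≼ μ₂`. Hence two
vertices `(μ, eν)`, `(μ', eν')` of `J` with the same first edge `e` and a common successor have
prefix-comparable `eν` and `eν'`; as the cylinders `Z(eν)` are nonempty (there are no sinks) and
pairwise disjoint, the two vertices coincide, i.e. `E_J` is left-resolving. Two paths with the same
`E`-label and the same range are then identified vertex by vertex, reading them backwards.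
-/

/-- A finite directed multigraph. -/
structure FinGraph where
  V : Type
  E : Type
  fintV : Fintype V
  fintE : Fintype E
  src : E → V
  rng : E → V

variable {G : FinGraph}

/-- A finite path in the graph `G`: a source vertex together with a compatible
list of edges (a vertex is a path of length 0). -/
structure FPath (G : FinGraph) where
  source : G.V
  edges : List G.E
  head_src : ∀ e ∈ edges.head?, G.src e = source
  chain : edges.Chain' fun e f => G.rng e = G.src f

/-- The range (terminal vertex) of a finite path. -/
def FPath.range (p : FPath G) : G.V :=
  p.edges.getLast?.elim p.source G.rng

/-- The length-0 path at a vertex. -/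
def FPath.nil (G : FinGraph) (v : G.V) : FPath G :=
  ⟨v, [], by simp, List.isChain_nil⟩

/-- `p.Prefix q` : the path `p` is an initial segment of the path `q`. -/
def FPath.Prefix (p q : FPath G) : Prop :=
  p.source = q.source ∧ p.edges <+: q.edges

/-- The path obtained by removing the first edge (the tail `κ` of `ν = eκ`). -/
def FPath.tail (p : FPath G) : FPath G where
  source := p.edges.head?.elim p.source G.rng
  edges := p.edges.tail
  head_src := by
    cases hp : p.edges with
    | nil => simp
    | cons a l =>
      have h : List.IsChain _ _ := p.chain
      rw [hp, List.isChain_cons] at h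
      intro e he
      simp only [hp, List.head?_cons, Option.elim, List.tail_cons] at he ⊢
      exact (h.1 e he).symm
  chain := p.chain.tail

/-- An infinite path in the graph `G`. -/
structure IPath (G : FinGraph) where
  edges : ℕ → G.E
  chain : ∀ i, G.rng (edges i) = G.src (edges (i + 1))

/-- The source vertex of an infinite path. -/
def IPath.source (p : IPath G) : G.V := G.src (p.edges 0)

/-- The cylinder set `Z(p)` of a finite path `p`: all infinite paths with prefix `p`. -/
def cylinder (p : FPath G) : Set (IPath G) :=
  {q | q.source = p.source ∧ ∀ i, (h : i < p.edges.length) → q.edges i = p.edges.get ⟨i, h⟩}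

/-- A finite collection `S` of finite paths is a partition of the path `ν`:
the cylinder sets are pairwise disjoint with union `Z(ν)`. -/
def IsPartitionOfPath (S : Set (FPath G)) (ν : FPath G) : Prop :=
  S.Finite ∧ (∀ p ∈ S, ∀ q ∈ S, p ≠ q → cylinder p ∩ cylinder q = ∅) ∧
    (⋃ p ∈ S, cylinder p) = cylinder ν

/-- A finite collection `S` of finite paths is a partition of the vertex `v`. -/
def IsPartitionOf (S : Set (FPath G)) (v : G.V) : Prop :=
  IsPartitionOfPath S (FPath.nil G v)

/-- Standing assumptions: no sinks, no sources, every cycle has an exit. -/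
structure Standing (G : FinGraph) : Prop where
  no_sinks : ∀ v : G.V, ∃ e, G.src e = v
  no_sources : ∀ v : G.V, ∃ e, G.rng e = v
  cycles_exit : ∀ p : FPath G, p.edges ≠ [] → p.range = p.source →
    ∃ e ∈ p.edges, ∃ f, f ≠ e ∧ G.src f = G.src e

/-- The combinatorial conditions making `u_J = Σ_{(μ,ν) ∈ J} S_μ S_ν^*` a unitary:
`J` is finite, `s(μ) = s(ν)`, `r(μ) = r(ν)`, `|ν| ≥ 1` for all `(μ,ν) ∈ J`, and both
families of cylinder sets are pairwise disjoint with union all of `E^∞`. -/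
structure IsUnitaryJ (G : FinGraph) (J : Set (FPath G × FPath G)) : Prop where
  finite : J.Finite
  src_eq : ∀ p ∈ J, (Prod.fst p).source = (Prod.snd p).source
  rng_eq : ∀ p ∈ J, FPath.range (Prod.fst p) = FPath.range (Prod.snd p)
  ne_nil : ∀ p ∈ J, (Prod.snd p).edges ≠ []
  disj₁ : ∀ p ∈ J, ∀ q ∈ J, p ≠ q → cylinder (Prod.fst p) ∩ cylinder (Prod.fst q) = ∅
  union₁ : (⋃ p ∈ J, cylinder (Prod.fst p)) = Set.univ
  disj₂ : ∀ p ∈ J, ∀ q ∈ J, p ≠ q → cylinder (Prod.snd p) ∩ cylinder (Prod.snd q) = ∅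
  union₂ : (⋃ p ∈ J, cylinder (Prod.snd p)) = Set.univ

/-- Adjacency in the coding graph `E_J`: there is an edge from `p = (μ₁, e₁ν₁)` to
`q = (μ₂, e₂ν₂)` iff the tail `ν₁` and `μ₂` are prefix-comparable
(the combinatorial content of `S_{ν₁}^* S_{μ₂} ≠ 0`). -/
def CGAdj (p q : FPath G × FPath G) : Prop :=
  FPath.Prefix p.2.tail q.1 ∨ FPath.Prefix q.1 p.2.tail

/-- The degree `|μ₂| − |ν₁|` of the coding-graph edge from `p` to `q`. -/
def cgDeg (p q : FPath G × FPath G) : ℤ :=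
  (q.1.edges.length : ℤ) - (p.2.tail.edges.length : ℤ)

/-- `IsAppend p q r` : the path `r` is the concatenation `p q`. -/
def IsAppend (p q r : FPath G) : Prop :=
  r.source = p.source ∧ q.source = p.range ∧ r.edges = p.edges ++ q.edges

/-- A finite path in the coding graph `E_J`, recorded by the (nonempty) list of
vertices of `J` it visits (a single vertex is a path of length 0). -/
structure CGPath (G : FinGraph) (J : Set (FPath G × FPath G)) where
  verts : List (FPath G × FPath G)
  ne : verts ≠ []
  mem : ∀ v ∈ verts, v ∈ J
  adj : verts.Chain' CGAdj

/-- The `E`-label of a path in the coding graph: the list of distinguished first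
edges `e` of the second coordinates of the vertices it visits. -/
def CGPath.elabel {J : Set (FPath G × FPath G)} (ω : CGPath G J) : List G.E :=
  ω.verts.filterMap fun v => v.2.edges.head?

/-- `IsLabelOf l γ` : `γ` is the `L_J`-label of the coding-graph path visiting the
vertices in the list `l` (all of whose edges are non-negative): the concatenation of
the `L_J`-labels of its edges, and the empty path at `r(μ)` for the length-0 path
at a vertex `(μ, eν)`. -/
inductive IsLabelOf : List (FPath G × FPath G) → FPath G → Prop
  | single (p : FPath G × FPath G) (γ : FPath G) :
      γ.edges = [] → γ.source = FPath.range p.1 → IsLabelOf [p] γ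
  | cons (p q : FPath G × FPath G) (rest : List (FPath G × FPath G)) (α γ δ : FPath G) :
      IsAppend p.2.tail α q.1 → IsLabelOf (q :: rest) γ → IsAppend α γ δ →
      IsLabelOf (p :: q :: rest) δ

/-- Every edge of the coding graph `E_J` is non-negative. -/
def AllEdgesNonneg (G : FinGraph) (J : Set (FPath G × FPath G)) : Prop :=
  ∀ p ∈ J, ∀ q ∈ J, CGAdj p q → 0 ≤ cgDeg p q

/-- The coding graph `E_J` contains a non-positive cycle. -/
def HasNonposCycle (G : FinGraph) (J : Set (FPath G × FPath G)) : Prop :=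
  ∃ ω : CGPath G J, 2 ≤ ω.verts.length ∧ ω.verts.getLast ω.ne = ω.verts.head ω.ne ∧
    ω.verts.Chain' fun p q => cgDeg p q ≤ 0

/-- All outgoing edges of the vertex `p` in the coding graph `E_J` are positive. -/
def AllOutPositive (G : FinGraph) (J : Set (FPath G × FPath G))
    (p : FPath G × FPath G) : Prop :=
  ∀ q ∈ J, CGAdj p q → 0 < cgDeg p q

/-- `IsSnoc p f q` : the path `q` is `p` extended by the single edge `f`. -/
def IsSnoc (p : FPath G) (f : G.E) (q : FPath G) : Prop :=
  q.source = p.source ∧ q.edges = p.edges ++ [f]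

/-- `IsSplitting G J p J'` : `J'` is the splitting of `J` at the vertex `p = (μ, eν)`,
i.e. `J' = (J ∖ {(μ,eν)}) ∪ {(μf, eνf) : f ∈ E¹, s(f) = r(μ)}`. -/
def IsSplitting (G : FinGraph) (J : Set (FPath G × FPath G)) (p : FPath G × FPath G)
    (J' : Set (FPath G × FPath G)) : Prop :=
  p ∈ J ∧ ∀ q, q ∈ J' ↔ (q ∈ J ∧ q ≠ p) ∨
    ∃ f, G.src f = FPath.range p.1 ∧ IsSnoc p.1 f q.1 ∧ IsSnoc p.2 f q.2

/-- The set of negative edges of the coding graph `E_J`. -/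
def negEdgeSet (G : FinGraph) (J : Set (FPath G × FPath G)) :
    Set ((FPath G × FPath G) × (FPath G × FPath G)) :=
  {e | e.1 ∈ J ∧ e.2 ∈ J ∧ CGAdj e.1 e.2 ∧ cgDeg e.1 e.2 < 0}

/-- `IsFinalNeg G J p q ω d` : the edge from `p` to `q` in `E_J` is a final negative
edge with destination `d`, via the zero path `ω` from `q` to `d`; the height of the
edge is `ω.verts.length - 1`. -/
def IsFinalNeg (G : FinGraph) (J : Set (FPath G × FPath G))
    (p q : FPath G × FPath G) (ω : CGPath G J) (d : FPath G × FPath G) : Prop :=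
  p ∈ J ∧ q ∈ J ∧ CGAdj p q ∧ cgDeg p q < 0 ∧
    ω.verts.head ω.ne = q ∧ ω.verts.getLast ω.ne = d ∧
    (ω.verts.Chain' fun a b => cgDeg a b = 0) ∧ AllOutPositive G J d

/-- `(E_J, E)` is left-synchronizing with delay `m` : any two paths of length `m`
(i.e. with `m+1` vertices) in `E_J` with the same `E`-label have the same source. -/
def LeftSyncDelay (G : FinGraph) (J : Set (FPath G × FPath G)) (m : ℕ) : Prop :=
  ∀ ω ξ : CGPath G J, ω.verts.length = m + 1 → ξ.verts.length = m + 1 →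
    ω.elabel = ξ.elabel → ω.verts.head ω.ne = ξ.verts.head ξ.ne

/-- An infinite path in the coding graph `E_J`. -/
structure CGIPath (G : FinGraph) (J : Set (FPath G × FPath G)) where
  verts : ℕ → FPath G × FPath G
  mem : ∀ i, verts i ∈ J
  adj : ∀ i, CGAdj (verts i) (verts (i + 1))

/-- The infinite `E`-label of an infinite coding-graph path is the infinite path `α`. -/
def ELabelInf {J : Set (FPath G × FPath G)} (ω : CGIPath G J) (α : IPath G) : Prop :=
  ∀ i, (ω.verts i).2.edges.head? = some (α.edges i)

/-- A transducer with input alphabet `A`, output alphabet `B`, a finite state set,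
an initial state and a transition function. -/
structure Transducer (A B : Type) where
  S : Type
  finS : Finite S
  init : S
  tr : S → A → S × List B

/-- The state sequence of a transducer on an infinite input word. -/
def Transducer.states {A B : Type} (T : Transducer A B) (α : ℕ → A) : ℕ → T.S
  | 0 => T.init
  | n + 1 => (T.tr (T.states α n) (α n)).1

/-- The `n`-th output block of a transducer on an infinite input word. -/
def Transducer.outBlock {A B : Type} (T : Transducer A B) (α : ℕ → A) (n : ℕ) : List B :=
  (T.tr (T.states α n) (α n)).2

/-- The concatenation of the first `n` blocks of a sequence of finite words. -/
def joinUpTo {X : Type} (f : ℕ → List X) (n : ℕ) : List X :=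
  ((List.range n).map f).flatten

/-- Two infinite concatenations of sequences of finite words are equal. -/
def StreamsEq {X : Type} (f g : ℕ → List X) : Prop :=
  (∀ n, ∃ m, joinUpTo f n <+: joinUpTo g m) ∧ ∀ n, ∃ m, joinUpTo g n <+: joinUpTo f m

/-- The type of edges of the coding graph `E_J`. -/
def CGEdgeT (G : FinGraph) (J : Set (FPath G × FPath G)) : Type :=
  {e : (FPath G × FPath G) × (FPath G × FPath G) // e.1 ∈ J ∧ e.2 ∈ J ∧ CGAdj e.1 e.2}

/-- The sequence of edges of an infinite coding-graph path. -/
def CGIPath.edgeSeq {J : Set (FPath G × FPath G)} (ω : CGIPath G J) (i : ℕ) : CGEdgeT G J :=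
  ⟨(ω.verts i, ω.verts (i + 1)), ω.mem i, ω.mem (i + 1), ω.adj i⟩

theorem List.map_eq_map_of_filterMap_eq {α β : Type*} {f : α → Option β} {l₁ l₂ : List α}
    (h₁ : ∀ x ∈ l₁, (f x).isSome) (h₂ : ∀ x ∈ l₂, (f x).isSome)
    (h : l₁.filterMap f = l₂.filterMap f) : l₁.map f = l₂.map f := by
  have map_some_filterMap : ∀ l : List α, (∀ x ∈ l, (f x).isSome) →
      (l.filterMap f).map some = l.map f := fun l hl => by
    rw [List.map_filterMap, List.filterMap_eq_map_iff_forall_eq_some]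
    intro x hx
    obtain ⟨b, hb⟩ := Option.isSome_iff_exists.mp (hl x hx)
    simp [hb]
  rw [← map_some_filterMap l₁ h₁, ← map_some_filterMap l₂ h₂, h]

def LeftResolvingOn {α β : Type*} (R : α → α → Prop) (f : α → β) (S : Set α) : Prop :=
  ∀ p ∈ S, ∀ p' ∈ S, ∀ q ∈ S, R p q → R p' q → f p = f p' → p = p'

namespace LeftResolvingOn

variable {α β : Type*} {R : α → α → Prop} {f : α → β} {S : Set α}

theorem eq_of_isChain_flip_of_head?_eq (hR : LeftResolvingOn R f S) :
    ∀ {l₁ l₂ : List α}, (∀ x ∈ l₁, x ∈ S) → (∀ x ∈ l₂, x ∈ S) →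
      l₁.IsChain (flip R) → l₂.IsChain (flip R) → l₁.map f = l₂.map f →
      l₁.head? = l₂.head? → l₁ = l₂
  | [], [], _, _, _, _, _, _ => rfl
  | a :: t, a' :: t', hS₁, hS₂, hc₁, hc₂, hf, hh => by
    obtain rfl : a = a' := by simpa using hh
    have ht : t.head? = t'.head? := by
      rcases t with _ | ⟨b, t⟩ <;> rcases t' with _ | ⟨b', t'⟩
      · rfl
      · simp at hf
      · simp at hf
      · simp only [List.map_cons, List.cons.injEq] at hf
        simp only [List.head?_cons, Option.some.injEq]
        exact hR b (hS₁ b (by simp)) b' (hS₂ b' (by simp)) a (hS₁ a (by simp))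
          (List.isChain_cons_cons.mp hc₁).1 (List.isChain_cons_cons.mp hc₂).1 hf.2.1
    rw [hR.eq_of_isChain_flip_of_head?_eq (fun x hx => hS₁ x (List.mem_cons_of_mem a hx))
      (fun x hx => hS₂ x (List.mem_cons_of_mem a hx)) hc₁.tail hc₂.tail
      (List.cons_injective hf) ht]
  | [], _ :: _, _, _, _, _, _, hh | _ :: _, [], _, _, _, _, _, hh => by simp at hh

theorem eq_of_isChain_of_getLast?_eq (hR : LeftResolvingOn R f S) {l₁ l₂ : List α}
    (hS₁ : ∀ x ∈ l₁, x ∈ S) (hS₂ : ∀ x ∈ l₂, x ∈ S) (hc₁ : l₁.IsChain R) (hc₂ : l₂.IsChain R)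
    (hf : l₁.map f = l₂.map f) (hl : l₁.getLast? = l₂.getLast?) : l₁ = l₂ := by
  refine List.reverse_injective <| hR.eq_of_isChain_flip_of_head?_eq
    (fun x hx => hS₁ x (List.mem_reverse.mp hx)) (fun x hx => hS₂ x (List.mem_reverse.mp hx))
    (List.isChain_reverse.mpr hc₁) (List.isChain_reverse.mpr hc₂) ?_ ?_
  · rw [List.map_reverse, List.map_reverse, hf]
  · rw [List.head?_reverse, List.head?_reverse, hl]

end LeftResolvingOn

theorem IPath.exists_source_eq (hsink : ∀ v : G.V, ∃ e, G.src e = v) (v : G.V) :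
    ∃ x : IPath G, x.source = v := by
  choose out hout using hsink
  exact ⟨⟨fun n => out ((G.rng ∘ out)^[n] v),
    fun n => by simp [Function.iterate_succ_apply', hout]⟩, hout v⟩

def IPath.cons (e : G.E) (x : IPath G) (h : G.rng e = x.source) : IPath G where
  edges
    | 0 => e
    | n + 1 => x.edges n
  chain
    | 0 => h
    | n + 1 => x.chain n

theorem FPath.cylinder_nonempty (hsink : ∀ v : G.V, ∃ e, G.src e = v) (p : FPath G) :
    (cylinder p).Nonempty := by
  match hp : p.edges with
  | [] =>
    obtain ⟨x, hx⟩ := IPath.exists_source_eq hsink p.source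
    exact ⟨x, hx, fun i hi => by simp [hp] at hi⟩
  | e :: l =>
    obtain ⟨x, hx, hxp⟩ := p.tail.cylinder_nonempty hsink
    have hsrc : G.src e = p.source := p.head_src e (by simp [hp])
    have htail : p.tail.source = G.rng e := by simp [FPath.tail, hp]
    refine ⟨x.cons e (hx.trans htail).symm, hsrc, fun i hi => ?_⟩
    have htail_edges : p.tail.edges = l := by simp [FPath.tail, hp]
    rcases i with _ | n
    · simp [IPath.cons, hp]
    · have hn : n < p.tail.edges.length := by
        rw [htail_edges]
        simpa [hp] using hi
      simp [IPath.cons, hxp n hn, htail_edges, hp]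
termination_by p.edges.length
decreasing_by simp [FPath.tail, hp]

theorem FPath.Prefix.cylinder_subset {p q : FPath G} (h : p.Prefix q) :
    cylinder q ⊆ cylinder p := by
  rintro x ⟨hsrc, hedges⟩
  refine ⟨hsrc.trans h.1.symm, fun i hi => ?_⟩
  rw [hedges i (hi.trans_le h.2.length_le)]
  simp only [List.get_eq_getElem]
  exact (h.2.getElem hi).symm

theorem FPath.prefix_or_prefix_of_prefix {p q r : FPath G} (hp : p.Prefix r) (hq : q.Prefix r) :
    p.Prefix q ∨ q.Prefix p :=
  (List.prefix_or_prefix_of_prefix hp.2 hq.2).imp (⟨hp.1.trans hq.1.symm, ·⟩)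
    (⟨hq.1.trans hp.1.symm, ·⟩)

theorem FPath.prefix_of_tail_prefix {p q : FPath G} (hh : p.edges.head? = q.edges.head?)
    (h : p.tail.Prefix q.tail) : p.Prefix q := by
  obtain ⟨hsrc, hedges⟩ := h
  rcases hp : p.edges with _ | ⟨e, l⟩ <;> rcases hq : q.edges with _ | ⟨e', l'⟩ <;>
    simp only [hp, hq, List.head?_nil, List.head?_cons, reduceCtorEq, Option.some.injEq] at hh
  · exact ⟨by simpa [FPath.tail, hp, hq] using hsrc, by simp [hp]⟩
  · subst hh
    refine ⟨(p.head_src e (by simp [hp])).symm.trans (q.head_src e (by simp [hq])), ?_⟩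
    simpa [FPath.tail, hp, hq] using hedges

theorem CGAdj.tail_prefix_of_nonneg {p q : FPath G × FPath G} (h : CGAdj p q)
    (hd : 0 ≤ cgDeg p q) : p.2.tail.Prefix q.1 := by
  rcases h with h | h
  · exact h
  · have hlen : p.2.tail.edges.length ≤ q.1.edges.length := by unfold cgDeg at hd; omega
    have heq : q.1.edges = p.2.tail.edges := h.2.eq_of_length (le_antisymm h.2.length_le hlen)
    exact ⟨h.1.symm, heq ▸ List.prefix_refl _⟩

namespace IsUnitaryJ

variable {J : Set (FPath G × FPath G)}

theorem eq_of_snd_prefix (hsink : ∀ v : G.V, ∃ e, G.src e = v) (hJ : IsUnitaryJ G J)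
    {p q : FPath G × FPath G} (hp : p ∈ J) (hq : q ∈ J) (h : p.2.Prefix q.2) : p = q := by
  by_contra hne
  obtain ⟨x, hx⟩ := q.2.cylinder_nonempty hsink
  exact (hJ.disj₂ p hp q hq hne).subset ⟨h.cylinder_subset hx, hx⟩

theorem leftResolvingOn (hsink : ∀ v : G.V, ∃ e, G.src e = v) (hJ : IsUnitaryJ G J)
    (hnn : AllEdgesNonneg G J) : LeftResolvingOn CGAdj (fun p => p.2.edges.head?) J := by
  intro p hp p' hp' q hq h h' hh
  rcases FPath.prefix_or_prefix_of_prefix (h.tail_prefix_of_nonneg (hnn p hp q hq h))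
    (h'.tail_prefix_of_nonneg (hnn p' hp' q hq h')) with htail | htail
  · exact hJ.eq_of_snd_prefix hsink hp hp' (FPath.prefix_of_tail_prefix hh htail)
  · exact (hJ.eq_of_snd_prefix hsink hp' hp (FPath.prefix_of_tail_prefix hh.symm htail)).symm

end IsUnitaryJ

theorem CGPath.ext {J : Set (FPath G × FPath G)} {ω ξ : CGPath G J} (h : ω.verts = ξ.verts) :
    ω = ξ := by
  cases ω; cases ξ; subst h; rfl

/-- if every edge of `E_J` is non-negative, then the left-resolving
property extends to paths: finite paths in `E_J` with the same `E`-label and the same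
range coincide. -/
theorem left_resolving_paths (G : FinGraph) (hG : Standing G)
    (J : Set (FPath G × FPath G)) (hJ : IsUnitaryJ G J)
    (hnn : AllEdgesNonneg G J) (ω ξ : CGPath G J)
    (he : ω.elabel = ξ.elabel)
    (hr : ω.verts.getLast ω.ne = ξ.verts.getLast ξ.ne) :
    ω = ξ := by
  have hlabel_isSome (ζ : CGPath G J) : ∀ v ∈ ζ.verts, (v.2.edges.head?).isSome :=
    fun v hv => List.isSome_head?.mpr (hJ.ne_nil v (ζ.mem v hv))
  refine CGPath.ext <| (hJ.leftResolvingOn hG.no_sinks hnn).eq_of_isChain_of_getLast?_eq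
    ω.mem ξ.mem ω.adj ξ.adj ?_ ?_
  · exact List.map_eq_map_of_filterMap_eq (hlabel_isSome ω) (hlabel_isSome ξ) he
  · rw [List.getLast?_eq_some_getLast ω.ne, List.getLast?_eq_some_getLast ξ.ne, hr]
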